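/- arXiv:1405.1649 — 6 statements merged into one kernel-verified Lean document; each statement's English description precedes it below -/
import Mathlib

section
/- Let d ≥ 2 and δ ≥ 2 be integers. Let H = (V, E) be a hypergraph on n ≥ 1 vertices in which every hyperedge has size at least d and whose average degree (Σ_{v∈V} deg(v))/n is at most δ. Then H contains an independent set M with |M| ≥ (n / δ^{1/(d-1)}) · (1 − 1/d). -/
open Finset

lemma sum_pow_powerset {V : Type*} [DecidableEq V] (p q : ℝ) (B : Finset V) :
    ∑ T ∈ B.powerset, p ^ T.card * q ^ (B.card - T.card) = (p + q) ^ B.card := by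
  have h := Finset.prod_add (fun _ : V => p) (fun _ : V => q) B
  simp only [Finset.prod_const] at h
  rw [h]
  exact Finset.sum_congr rfl fun T hT => by
    rw [Finset.card_sdiff_of_subset (Finset.mem_powerset.mp hT)]

lemma sum_cond {V : Type*} [Fintype V] [DecidableEq V] (p q : ℝ) (hpq : p + q = 1)
    (A : Finset V) :
    ∑ S ∈ Finset.univ.powerset.filter (fun S => A ⊆ S),
      p ^ S.card * q ^ (Fintype.card V - S.card) = p ^ A.card := by
  have key : ∑ S ∈ Finset.univ.powerset.filter (fun S => A ⊆ S),
      p ^ S.card * q ^ (Fintype.card V - S.card)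
      = ∑ T ∈ (Finset.univ \ A).powerset,
          p ^ A.card * (p ^ T.card * q ^ ((Finset.univ \ A).card - T.card)) := by
    apply Finset.sum_nbij' (fun S => S \ A) (fun T => A ∪ T)
    · intro S hS
      simp only [mem_filter, mem_powerset] at hS
      exact mem_powerset.mpr (sdiff_subset_sdiff hS.1 le_rfl)
    · intro T hT
      simp only [mem_filter, mem_powerset]
      exact ⟨subset_univ _, subset_union_left⟩
    · intro S hS
      simp only [mem_filter, mem_powerset] at hS
      exact union_sdiff_of_subset hS.2
    · intro T hT
      simp only [mem_powerset] at hT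
      have hdisj : Disjoint A T := ((subset_sdiff.mp hT).2).symm
      exact union_sdiff_cancel_left hdisj
    · intro S hS
      simp only [mem_filter, mem_powerset] at hS
      have h1 : (S \ A).card = S.card - A.card := card_sdiff_of_subset hS.2
      have h2 : (Finset.univ \ A).card = Fintype.card V - A.card := by
        rw [card_sdiff_of_subset (subset_univ A), card_univ]
      have hAS : A.card ≤ S.card := card_le_card hS.2
      have hSU : S.card ≤ Fintype.card V := by
        simpa [card_univ] using card_le_card hS.1
      rw [h1, h2, ← mul_assoc, ← pow_add]
      have h3 : A.card + (S.card - A.card) = S.card := by omega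
      have h4 : Fintype.card V - A.card - (S.card - A.card) = Fintype.card V - S.card := by
        omega
      rw [h3, h4]
  rw [key, ← Finset.mul_sum, sum_pow_powerset, hpq, one_pow, mul_one]

lemma double_count {V : Type*} [Fintype V] [DecidableEq V] (E : Finset (Finset V)) :
    ∑ v : V, (E.filter (fun e => v ∈ e)).card = ∑ e ∈ E, e.card := by
  simp only [Finset.card_filter]
  rw [Finset.sum_comm]
  congr 1
  ext e
  rw [← Finset.card_filter]
  simp [Finset.filter_mem_eq_inter]

/-- **Turán's theorem for hypergraphs** (Lemma `thm:Turan` of the paper).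
If every hyperedge of a hypergraph on `n ≥ 1` vertices has size at least `d ≥ 2`
and the average degree is at most `δ ≥ 2`, then there is an independent set of
size at least `(n / δ^(1/(d-1))) · (1 - 1/d)`. -/
theorem hypergraph_turan {V : Type*} [Fintype V] [DecidableEq V]
    (E : Finset (Finset V)) (d δ : ℕ) (hd : 2 ≤ d) (hδ : 2 ≤ δ)
    (hn : 1 ≤ Fintype.card V)
    (hdim : ∀ e ∈ E, d ≤ e.card)
    (hdeg : ((∑ v : V, (E.filter (fun e => v ∈ e)).card : ℕ) : ℝ) / Fintype.card V ≤ δ) :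
    ∃ M : Finset V, (∀ e ∈ E, ¬ e ⊆ M) ∧
      ((Fintype.card V : ℝ) / (δ : ℝ) ^ ((1 : ℝ) / ((d : ℝ) - 1)) * (1 - 1 / (d : ℝ))
        ≤ M.card) := by
  classical
  have hV : Nonempty V := Fintype.card_pos_iff.mp hn
  set n := Fintype.card V with hndef
  have hd2 : (2:ℝ) ≤ (d:ℝ) := by exact_mod_cast hd
  have hd1 : (1:ℝ) ≤ (d:ℝ) - 1 := by linarith
  have hd0 : (0:ℝ) < (d:ℝ) := by linarith
  have hδ1 : (1:ℝ) < (δ:ℝ) := by exact_mod_cast Nat.lt_of_lt_of_le one_lt_two hδ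
  have hδ0 : (0:ℝ) < (δ:ℝ) := by linarith
  set x : ℝ := (1:ℝ)/((d:ℝ)-1) with hxdef
  have hx0 : 0 < x := div_pos one_pos (by linarith)
  set p : ℝ := (δ:ℝ) ^ (-x) with hpdef
  have hp0 : 0 < p := Real.rpow_pos_of_pos hδ0 _
  have hp1 : p < 1 := Real.rpow_lt_one_of_one_lt_of_neg hδ1 (by linarith)
  set q : ℝ := 1 - p with hqdef
  have hq0 : 0 < q := by rw [hqdef]; linarith
  have hpq : p + q = 1 := by rw [hqdef]; ring
  -- key rpow identity : p ^ (d-1) = 1/δ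
  have hkey : p ^ (d - 1) = 1 / (δ:ℝ) := by
    rw [hpdef, ← Real.rpow_natCast ((δ:ℝ) ^ (-x)) (d-1), ← Real.rpow_mul hδ0.le]
    have hcast : ((d - 1 : ℕ) : ℝ) = (d:ℝ) - 1 := by
      have h1 : 1 ≤ d := by omega
      push_cast [h1]
      ring
    rw [hcast]
    have hmul : -x * ((d:ℝ)-1) = -1 := by
      rw [hxdef]; field_simp
    rw [hmul, Real.rpow_neg_one, one_div]
  set w : Finset V → ℝ := fun S => p ^ S.card * q ^ (n - S.card) with hwdef
  have hw0 : ∀ S : Finset V, 0 < w S := fun S => mul_pos (pow_pos hp0 _) (pow_pos hq0 _)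
  have hA : ∀ A : Finset V,
      ∑ S ∈ Finset.univ.powerset.filter (fun S => A ⊆ S), w S = p ^ A.card :=
    fun A => sum_cond p q hpq A
  have hsum1 : ∑ S ∈ Finset.univ.powerset, w S = 1 := by
    have h := hA ∅
    rw [Finset.filter_true_of_mem (fun S _ => Finset.empty_subset S)] at h
    simpa using h
  set N : Finset V → ℕ := fun S => (E.filter (fun e => e ⊆ S)).card with hNdef
  -- expected size
  have hEcard : ∑ S ∈ Finset.univ.powerset, w S * (S.card : ℝ) = (n:ℝ) * p := by
    have step : ∀ S ∈ Finset.univ.powerset, w S * (S.card : ℝ)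
        = ∑ v : V, if v ∈ S then w S else 0 := by
      intro S _
      rw [Finset.sum_ite_mem, Finset.univ_inter, Finset.sum_const, nsmul_eq_mul, mul_comm]
    rw [Finset.sum_congr rfl step, Finset.sum_comm]
    have inner : ∀ v : V,
        ∑ S ∈ Finset.univ.powerset, (if v ∈ S then w S else 0) = p := by
      intro v
      rw [Finset.sum_ite, Finset.sum_const_zero, add_zero]
      have heq : Finset.univ.powerset.filter (fun S => v ∈ S)
          = Finset.univ.powerset.filter (fun S => {v} ⊆ S) := by
        simp [Finset.singleton_subset_iff]
      rw [heq, hA {v}]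
      simp
    rw [Finset.sum_congr rfl (fun v _ => inner v), Finset.sum_const, Finset.card_univ,
      nsmul_eq_mul]
  -- expected number of contained edges
  have hEN : ∑ S ∈ Finset.univ.powerset, w S * (N S : ℝ) = ∑ e ∈ E, p ^ e.card := by
    have step : ∀ S ∈ Finset.univ.powerset, w S * (N S : ℝ)
        = ∑ e ∈ E, if e ⊆ S then w S else 0 := by
      intro S _
      rw [Finset.sum_ite, Finset.sum_const_zero, add_zero, Finset.sum_const, nsmul_eq_mul,
        mul_comm]
    rw [Finset.sum_congr rfl step, Finset.sum_comm]
    refine Finset.sum_congr rfl fun e he => ?_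
    rw [Finset.sum_ite, Finset.sum_const_zero, add_zero]
    exact hA e
  set B : ℝ := (n:ℝ) * p - ∑ e ∈ E, p ^ e.card with hBdef
  have hexp : ∑ S ∈ Finset.univ.powerset, w S * ((S.card:ℝ) - (N S : ℝ)) = B := by
    simp only [mul_sub]
    rw [Finset.sum_sub_distrib, hEcard, hEN]
  have hex : ∃ S : Finset V, B ≤ (S.card:ℝ) - (N S : ℝ) := by
    by_contra hcon
    push_neg at hcon
    have hlt : ∑ S ∈ Finset.univ.powerset, w S * ((S.card:ℝ) - (N S:ℝ))
        < ∑ S ∈ Finset.univ.powerset, w S * B := by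
      apply Finset.sum_lt_sum_of_nonempty (Finset.powerset_nonempty _)
      intro S _
      exact mul_lt_mul_of_pos_left (hcon S) (hw0 S)
    rw [hexp, ← Finset.sum_mul, hsum1, one_mul] at hlt
    exact lt_irrefl _ hlt
  obtain ⟨S, hS⟩ := hex
  set g : Finset V → V := fun e => if h : e.Nonempty then h.choose else Classical.arbitrary V
    with hgdef
  have hg : ∀ e ∈ E, g e ∈ e := by
    intro e he
    have hne : e.Nonempty := Finset.card_pos.mp (by have := hdim e he; omega)
    simp only [hgdef, dif_pos hne]
    exact hne.choose_spec
  set D : Finset V := (E.filter (fun e => e ⊆ S)).image g with hDdef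
  refine ⟨S \ D, ?_, ?_⟩
  · intro e he hsub
    have heS : e ⊆ S := hsub.trans Finset.sdiff_subset
    have hin : g e ∈ D := Finset.mem_image_of_mem g (Finset.mem_filter.mpr ⟨he, heS⟩)
    have hmem : g e ∈ S \ D := hsub (hg e he)
    exact (Finset.mem_sdiff.mp hmem).2 hin
  · have hcard1 : (S.card:ℝ) - (N S : ℝ) ≤ ((S \ D).card : ℝ) := by
      have h1 : D.card ≤ N S := Finset.card_image_le
      have h2 : S.card ≤ (S \ D).card + D.card := Finset.card_le_card_sdiff_add_card
      have h1' : (D.card:ℝ) ≤ (N S : ℝ) := by exact_mod_cast h1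
      have h2' : (S.card:ℝ) ≤ ((S\D).card:ℝ) + (D.card:ℝ) := by exact_mod_cast h2
      linarith
    -- bound on the number of edges
    have hEbound : (d:ℝ) * E.card ≤ (δ:ℝ) * n := by
      have h1 : d * E.card ≤ ∑ e ∈ E, e.card := by
        calc d * E.card = ∑ _e ∈ E, d := by rw [Finset.sum_const, smul_eq_mul, mul_comm]
          _ ≤ ∑ e ∈ E, e.card := Finset.sum_le_sum hdim
      have h2 : ∑ e ∈ E, e.card = ∑ v : V, (E.filter (fun e => v ∈ e)).card :=
        (double_count E).symm
      have hn0 : (0:ℝ) < (n:ℝ) := by exact_mod_cast hn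
      rw [div_le_iff₀ hn0] at hdeg
      have h3 : ((∑ v : V, (E.filter (fun e => v ∈ e)).card : ℕ):ℝ) ≤ (δ:ℝ) * n := hdeg
      have h12 : d * E.card ≤ ∑ v : V, (E.filter (fun e => v ∈ e)).card := h2 ▸ h1
      have h1' : ((d * E.card : ℕ):ℝ) ≤ ((∑ v : V, (E.filter (fun e => v ∈ e)).card : ℕ):ℝ) := by
        exact_mod_cast h12
      push_cast at h1' h3
      linarith
    have hpd : p ^ d = p / (δ:ℝ) := by
      have hdd : d = (d - 1) + 1 := by omega
      rw [hdd, pow_succ, hkey, one_div_mul_eq_div]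
    have hsumE : ∑ e ∈ E, p ^ e.card ≤ (n:ℝ) * p / d := by
      have h4 : (E.card:ℝ) ≤ (δ:ℝ) * n / d := by
        rw [le_div_iff₀ hd0]; linarith
      calc ∑ e ∈ E, p ^ e.card ≤ ∑ e ∈ E, p ^ d :=
            Finset.sum_le_sum fun e he => pow_le_pow_of_le_one hp0.le hp1.le (hdim e he)
        _ = (E.card:ℝ) * p ^ d := by rw [Finset.sum_const, nsmul_eq_mul]
        _ = (E.card:ℝ) * (p / δ) := by rw [hpd]
        _ ≤ ((δ:ℝ) * n / d) * (p / δ) := by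
            exact mul_le_mul_of_nonneg_right h4 (by positivity)
        _ = (n:ℝ) * p / d := by field_simp
    have hfinal : (n:ℝ) * p * (1 - 1/(d:ℝ)) ≤ B := by
      rw [hBdef]
      have expand : (n:ℝ)*p*(1 - 1/(d:ℝ)) = (n:ℝ)*p - (n:ℝ)*p/(d:ℝ) := by
        field_simp
      linarith
    have hdiv : (n:ℝ) / (δ:ℝ) ^ x = (n:ℝ) * p := by
      rw [hpdef, Real.rpow_neg hδ0.le, div_eq_mul_inv]
    calc (n:ℝ)/(δ:ℝ)^x * (1 - 1/(d:ℝ)) = (n:ℝ) * p * (1 - 1/(d:ℝ)) := by rw [hdiv]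
      _ ≤ B := hfinal
      _ ≤ (S.card:ℝ) - (N S : ℝ) := hS
      _ ≤ ((S\D).card:ℝ) := hcard1
end

section
/- Let H' = (V', E') be a hypergraph and let S ⊆ V'. Let H'_S be the sub-hypergraph induced by S, i.e., the hypergraph with vertex set S and hyperedge set {e ∈ E' : e ⊆ S}, and let M_S be a maximal independent set of H'_S. Let V'' = V' \ S and let H'' be the hypergraph with vertex set V'' and hyperedge set {e ∩ V'' : e ∈ E' and e ⊆ M_S ∪ V''}, and let M'' be a maximal independent set of H''. Then M_S ∪ M'' is a maximal independent set of H'. -/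
/-- Correctness of the recursive step of the paper's CONGEST MIS algorithm
(the Claim in Section 3.3).  Here the hypergraph `H'` has vertex type `V` and
edge family `E'`, `S` is a subset of its vertices, `MS` is a maximal independent
set of the sub-hypergraph `H'_S` induced by `S` (whose edges are the `e ∈ E'`
with `e ⊆ S`), and `M''` is a maximal independent set of the hypergraph `H''` on
vertex set `V'' = Sᶜ` whose edges are the sets `e ∩ Sᶜ` for `e ∈ E'` with
`e ⊆ MS ∪ Sᶜ`.  Then `MS ∪ M''` is a maximal independent set of `H'`. -/
theorem mis_union_of_recursive_step {V : Type*} [Fintype V] [DecidableEq V]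
    (E' : Finset (Finset V)) (S MS M'' : Finset V)
    (hMS_sub : MS ⊆ S)
    (hMS_ind : ∀ e ∈ E', e ⊆ S → ¬ e ⊆ MS)
    (hMS_max : ∀ J : Finset V, J ⊆ S → MS ⊆ J → (∀ e ∈ E', e ⊆ S → ¬ e ⊆ J) → J = MS)
    (hM''_sub : M'' ⊆ Sᶜ)
    (hM''_ind : ∀ e ∈ E', e ⊆ MS ∪ Sᶜ → ¬ (e ∩ Sᶜ) ⊆ M'')
    (hM''_max : ∀ J : Finset V, J ⊆ Sᶜ → M'' ⊆ J →
      (∀ e ∈ E', e ⊆ MS ∪ Sᶜ → ¬ (e ∩ Sᶜ) ⊆ J) → J = M'') :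
    (∀ e ∈ E', ¬ e ⊆ MS ∪ M'') ∧
      ∀ J : Finset V, MS ∪ M'' ⊆ J → (∀ e ∈ E', ¬ e ⊆ J) → J = MS ∪ M'' := by
  constructor
  · intro e he hsub
    have h1 : e ⊆ MS ∪ Sᶜ := hsub.trans (Finset.union_subset_union_right hM''_sub)
    refine hM''_ind e he h1 ?_
    intro x hx
    simp only [Finset.mem_inter, Finset.mem_compl] at hx
    rcases Finset.mem_union.1 (hsub hx.1) with h | h
    · exact absurd (hMS_sub h) hx.2
    · exact h
  · intro J hJ hind
    have hMSJ : MS ⊆ J := (Finset.subset_union_left).trans hJ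
    have hS : J ∩ S = MS := by
      apply hMS_max _ Finset.inter_subset_right
      · exact fun x hx => Finset.mem_inter.2 ⟨hMSJ hx, hMS_sub hx⟩
      · intro e he _ hsub
        exact hind e he (hsub.trans Finset.inter_subset_left)
    have hC : J ∩ Sᶜ = M'' := by
      apply hM''_max _ Finset.inter_subset_right
      · exact fun x hx => Finset.mem_inter.2
          ⟨(Finset.subset_union_right.trans hJ) hx, hM''_sub hx⟩
      · intro e he hsub hsub2
        refine hind e he ?_
        intro x hx
        rcases Finset.mem_union.1 (hsub hx) with h | h
        · exact hMSJ h
        · exact Finset.inter_subset_left (hsub2 (Finset.mem_inter.2 ⟨hx, h⟩))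
    calc J = J ∩ S ∪ J ∩ Sᶜ := by
            rw [← Finset.inter_union_distrib_left, Finset.union_compl, Finset.inter_univ]
      _ = MS ∪ M'' := by rw [hS, hC]
end

section
/- Let G = (V, E) be a finite simple graph and let R ⊆ V be a dominating set of G (every v ∈ V either belongs to R or has a neighbor in R). Define the hypergraph H_R with vertex set R and hyperedge family {N[v] ∩ R : v ∈ V}, where N[v] denotes the closed neighborhood of v in G. Then a set D ⊆ R is a dominating set of G that is minimal among dominating sets of G contained in R if and only if D is a minimal hitting set of H_R. -/
lemma dom_iff_hit {V : Type*} [Fintype V] [DecidableEq V]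
    (G : SimpleGraph V) [DecidableRel G.Adj]
    (R S : Finset V) (hS : S ⊆ R) :
    (∀ v : V, v ∈ S ∨ ∃ u ∈ S, G.Adj v u) ↔
      (∀ v : V, (S ∩ (insert v (G.neighborFinset v) ∩ R)).Nonempty) := by
  constructor
  · intro h v
    rcases h v with hv | ⟨u, hu, hadj⟩
    · exact ⟨v, Finset.mem_inter.2 ⟨hv, Finset.mem_inter.2
        ⟨Finset.mem_insert_self _ _, hS hv⟩⟩⟩
    · exact ⟨u, Finset.mem_inter.2 ⟨hu, Finset.mem_inter.2
        ⟨Finset.mem_insert_of_mem (by simpa using hadj), hS hu⟩⟩⟩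
  · intro h v
    obtain ⟨u, hu⟩ := h v
    rw [Finset.mem_inter, Finset.mem_inter, Finset.mem_insert] at hu
    rcases hu with ⟨huS, hu2 | hu2, _⟩
    · exact Or.inl (hu2 ▸ huS)
    · exact Or.inr ⟨u, huS, by simpa using hu2⟩

/-- Correctness of the paper's reduction of the Restricted Minimal Dominating Set
(RMDS) problem to minimal hitting set on a hypergraph (Section 4).  Given a graph
`G` and a dominating set `R ⊆ V`, consider the hypergraph `H_R` with vertex set `R`
and hyperedges `N[v] ∩ R` for `v ∈ V` (`N[v]` the closed neighborhood).  A set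
`D ⊆ R` is a dominating set of `G` minimal among dominating sets contained in `R`
iff `D` is a minimal hitting set of `H_R`. -/
theorem rmds_iff_minimal_hitting {V : Type*} [Fintype V] [DecidableEq V]
    (G : SimpleGraph V) [DecidableRel G.Adj]
    (R : Finset V) (hR : ∀ v : V, v ∈ R ∨ ∃ u ∈ R, G.Adj v u)
    (D : Finset V) :
    (D ⊆ R ∧ (∀ v : V, v ∈ D ∨ ∃ u ∈ D, G.Adj v u) ∧
        ∀ D' : Finset V, D' ⊆ D → (∀ v : V, v ∈ D' ∨ ∃ u ∈ D', G.Adj v u) → D' = D) ↔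
      (D ⊆ R ∧
        (∀ v : V, (D ∩ (insert v (G.neighborFinset v) ∩ R)).Nonempty) ∧
        ∀ D' : Finset V, D' ⊆ D →
          (∀ v : V, (D' ∩ (insert v (G.neighborFinset v) ∩ R)).Nonempty) → D' = D) := by
  constructor
  · rintro ⟨hDR, hdom, hmin⟩
    refine ⟨hDR, (dom_iff_hit G R D hDR).1 hdom, fun D' hD'D hhit => ?_⟩
    exact hmin D' hD'D ((dom_iff_hit G R D' (hD'D.trans hDR)).2 hhit)
  · rintro ⟨hDR, hhit, hmin⟩
    refine ⟨hDR, (dom_iff_hit G R D hDR).2 hhit, fun D' hD'D hdom => ?_⟩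
    exact hmin D' hD'D ((dom_iff_hit G R D' (hD'D.trans hDR)).1 hdom)
end

section
/- Let G be a finite connected simple graph with at least 2 vertices and let F ⊆ E(G) be a subset of its edges. Construct the graph G' as follows: its vertices are the vertices of G, a subdividing vertex b_e for every edge e ∈ E(G), an outer vertex g_u for every vertex u ∈ V(G), and an outer vertex h_e for every e ∈ F; its edges are {u, b_e} and {v, b_e} for every edge e = {u, v} ∈ E(G), {u, g_u} for every u ∈ V(G), and {b_e, h_e} for every e ∈ F. Then for every minimal connected dominating set M of G', the following are equivalent: (i) no vertex of M is a subdividing vertex b_e with e ∈ E(G) \ F; (ii) the spanning subgraph (V(G), F) of G is connected. -/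
/-- The base relation defining the lower-bound graph `G'` of Lemma `lem:scs`:
the vertices are the original vertices (`Sum.inl u`), the subdividing vertices
`b_e` for edges `e` of `G` (`Sum.inr (Sum.inl b)`), the outer vertices `g_u`
for `u ∈ V(G)` (`Sum.inr (Sum.inr (Sum.inl g))`), and the outer vertices `h_e`
for `e ∈ F` (`Sum.inr (Sum.inr (Sum.inr h))`).  There are edges from each
endpoint of `e` to `b_e`, from `u` to `g_u`, and from `b_e` to `h_e` (`e ∈ F`). -/
def scsRel {V : Type*} (G : SimpleGraph V) (F : Set (Sym2 V)) :
    (V ⊕ (↥G.edgeSet ⊕ (V ⊕ ↥F))) → (V ⊕ (↥G.edgeSet ⊕ (V ⊕ ↥F))) → Prop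
  | Sum.inl u, Sum.inr (Sum.inl b) => u ∈ (b : Sym2 V)
  | Sum.inl u, Sum.inr (Sum.inr (Sum.inl g)) => u = g
  | Sum.inr (Sum.inl b), Sum.inr (Sum.inr (Sum.inr h)) => (b : Sym2 V) = (h : Sym2 V)
  | _, _ => False

/-- The graph `G'` constructed from `G` and `F ⊆ E(G)` in Lemma `lem:scs`. -/
def scsGraph {V : Type*} (G : SimpleGraph V) (F : Set (Sym2 V)) :
    SimpleGraph (V ⊕ (↥G.edgeSet ⊕ (V ⊕ ↥F))) :=
  SimpleGraph.fromRel (scsRel G F)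

namespace ScsAux

open SimpleGraph

variable {V : Type*} {G : SimpleGraph V} {F : Set (Sym2 V)}

lemma adj_g_iff {x} {u : V} :
    (scsGraph G F).Adj x (Sum.inr (Sum.inr (Sum.inl u))) ↔ x = Sum.inl u := by
  rw [scsGraph, SimpleGraph.fromRel_adj]
  rcases x with v | (b | (g | h)) <;> simp [scsRel]

lemma adj_h_iff (hFsub : F ⊆ G.edgeSet) {x} {f : ↥F} :
    (scsGraph G F).Adj x (Sum.inr (Sum.inr (Sum.inr f))) ↔
      x = Sum.inr (Sum.inl ⟨(f : Sym2 V), hFsub f.2⟩) := by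
  rw [scsGraph, SimpleGraph.fromRel_adj]
  rcases x with v | (b | (g | h)) <;> simp [scsRel, Subtype.ext_iff]

lemma adj_b {u : V} {b : ↥G.edgeSet} (h : u ∈ (b : Sym2 V)) :
    (scsGraph G F).Adj (Sum.inl u) (Sum.inr (Sum.inl b)) := by
  rw [scsGraph, SimpleGraph.fromRel_adj]
  refine ⟨by simp, Or.inl ?_⟩
  simpa [scsRel] using h

lemma eq_of_adj_b {x} {b : ↥G.edgeSet} (h : (scsGraph G F).Adj x (Sum.inr (Sum.inl b))) :
    (∃ u, x = Sum.inl u ∧ u ∈ (b : Sym2 V)) ∨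
      (∃ f : ↥F, x = Sum.inr (Sum.inr (Sum.inr f)) ∧ (b : Sym2 V) = (f : Sym2 V)) := by
  rw [scsGraph, SimpleGraph.fromRel_adj] at h
  rcases x with v | (b' | (g | f)) <;> simp [scsRel] at h
  · exact Or.inl ⟨v, rfl, h⟩
  · exact Or.inr ⟨f, rfl, h⟩

lemma exists_adj_of_ne {W : Type*} {H : SimpleGraph W} {S : Set W}
    (hc : (H.induce S).Connected) {x y : W} (hx : x ∈ S) (hy : y ∈ S) (hne : x ≠ y) :
    ∃ z ∈ S, H.Adj x z := by
  obtain ⟨p⟩ := hc.preconnected ⟨x, hx⟩ ⟨y, hy⟩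
  have hp : ¬ p.Nil := SimpleGraph.Walk.not_nil_of_ne (fun h => hne (congrArg Subtype.val h))
  have := p.adj_snd hp
  exact ⟨(p.getVert 1 : ↥S), (p.getVert 1).2, by simpa using this⟩

lemma induce_adj {W : Type*} {H : SimpleGraph W} {S : Set W} {a b : W}
    (ha : a ∈ S) (hb : b ∈ S) (h : H.Adj a b) :
    (H.induce S).Adj ⟨a, ha⟩ ⟨b, hb⟩ := by simpa using h

noncomputable def proj : (V ⊕ (↥G.edgeSet ⊕ (V ⊕ ↥F))) → V
  | Sum.inl u => u
  | Sum.inr (Sum.inl b) => (b : Sym2 V).out.1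
  | Sum.inr (Sum.inr (Sum.inl g)) => g
  | Sum.inr (Sum.inr (Sum.inr h)) => (h : Sym2 V).out.1

lemma reach_of_mem_F {e : Sym2 V} (he : e ∈ F) {u v : V} (hu : u ∈ e) (hv : v ∈ e) :
    (SimpleGraph.fromEdgeSet F).Reachable u v := by
  by_cases h : u = v
  · exact h ▸ Reachable.refl _
  · refine SimpleGraph.Adj.reachable ?_
    rw [SimpleGraph.fromEdgeSet_adj]
    have : e = s(u, v) := (Sym2.mem_and_mem_iff h).mp ⟨hu, hv⟩
    exact ⟨this ▸ he, h⟩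

lemma rel_reach {M : Set (V ⊕ (↥G.edgeSet ⊕ (V ⊕ ↥F)))}
    (good : ∀ b : ↥G.edgeSet, Sum.inr (Sum.inl b) ∈ M → (b : Sym2 V) ∈ F)
    {x y} (hy : y ∈ M) (hr : scsRel G F x y) :
    (SimpleGraph.fromEdgeSet F).Reachable (proj x) (proj y) := by
  rcases x with v | (b | (g | h)) <;> rcases y with v' | (b' | (g' | h')) <;>
    simp [scsRel] at hr
  · exact reach_of_mem_F (good b' hy) hr (Sym2.out_fst_mem _)
  · subst hr; exact Reachable.refl _
  · exact reach_of_mem_F h'.2 (hr ▸ Sym2.out_fst_mem _) (Sym2.out_fst_mem _)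

lemma walk_reach {M : Set (V ⊕ (↥G.edgeSet ⊕ (V ⊕ ↥F)))}
    (good : ∀ b : ↥G.edgeSet, Sum.inr (Sum.inl b) ∈ M → (b : Sym2 V) ∈ F) :
    ∀ {x y : ↥M} (_ : ((scsGraph G F).induce M).Walk x y),
      (SimpleGraph.fromEdgeSet F).Reachable (proj x.1) (proj y.1) := by
  intro x y p
  induction p with
  | nil => exact Reachable.refl _
  | @cons a c d h p ih =>
    refine Reachable.trans ?_ ih
    have hadj : (scsGraph G F).Adj a.1 c.1 := by simpa using h
    rw [scsGraph, SimpleGraph.fromRel_adj] at hadj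
    rcases hadj.2 with hr | hr
    · exact rel_reach good c.2 hr
    · exact (rel_reach good a.2 hr).symm

end ScsAux

open ScsAux

/-- Lemma `lem:scs` of the paper: for every minimal connected dominating set `M`
of `G'`, `M` avoids all subdividing vertices `b_e` with `e ∈ E(G) \ F` if and
only if the spanning subgraph `(V(G), F)` is connected. -/
theorem mcds_avoids_subdividers_iff_spanning_connected {V : Type*} [Fintype V]
    (G : SimpleGraph V) (hG : G.Connected) (hcard : 2 ≤ Fintype.card V)
    (F : Set (Sym2 V)) (hF : F ⊆ G.edgeSet)
    (M : Set (V ⊕ (↥G.edgeSet ⊕ (V ⊕ ↥F))))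
    (hdom : ∀ w, w ∈ M ∨ ∃ x ∈ M, (scsGraph G F).Adj w x)
    (hconn : ((scsGraph G F).induce M).Connected)
    (hmin : ∀ M' ⊆ M, (∀ w, w ∈ M' ∨ ∃ x ∈ M', (scsGraph G F).Adj w x) →
      ((scsGraph G F).induce M').Connected → M' = M) :
    (∀ b : ↥G.edgeSet, (b : Sym2 V) ∉ F → Sum.inr (Sum.inl b) ∉ M) ↔
      (SimpleGraph.fromEdgeSet F).Connected := by
  classical
  have hne2 : Nonempty V := Fintype.card_pos_iff.mp (by omega)
  obtain ⟨v0⟩ := hne2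
  -- every original vertex is in M
  have hV : ∀ u : V, Sum.inl u ∈ M := by
    intro u
    by_cases hu : Sum.inl u ∈ M
    · exact hu
    exfalso
    rcases hdom (Sum.inr (Sum.inr (Sum.inl u))) with hg | ⟨x, hx, hadj⟩
    · obtain ⟨u', hu'⟩ := Fintype.exists_ne_of_one_lt_card (by omega) u
      have hy : ∃ y ∈ M, y ≠ Sum.inr (Sum.inr (Sum.inl u)) := by
        rcases hdom (Sum.inr (Sum.inr (Sum.inl u'))) with hg' | ⟨x', hx', hadj'⟩
        · exact ⟨_, hg', by simp [hu']⟩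
        · have hx'eq := adj_g_iff.mp hadj'.symm
          exact ⟨x', hx', by rw [hx'eq]; simp⟩
      obtain ⟨y, hyM, hyne⟩ := hy
      obtain ⟨z, hzM, hadjz⟩ := exists_adj_of_ne hconn hg hyM hyne.symm
      have hz := adj_g_iff.mp hadjz.symm
      rw [hz] at hzM
      exact hu hzM
    · have hxeq := adj_g_iff.mp hadj.symm
      rw [hxeq] at hx
      exact hu hx
  -- every subdividing vertex of an edge of F is in M
  have hB : ∀ f : ↥F,
      Sum.inr (Sum.inl (⟨(f : Sym2 V), hF f.2⟩ : ↥G.edgeSet)) ∈ M := by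
    intro f
    rcases hdom (Sum.inr (Sum.inr (Sum.inr f))) with hh | ⟨x, hx, hadj⟩
    · obtain ⟨z, hzM, hadjz⟩ := exists_adj_of_ne hconn hh (hV v0) (by simp)
      have hz := (adj_h_iff hF).mp hadjz.symm
      rwa [hz] at hzM
    · have hxeq := (adj_h_iff hF).mp hadj.symm
      rwa [hxeq] at hx
  constructor
  · -- (i) → (ii)
    intro hi
    rw [SimpleGraph.connected_iff]
    refine ⟨?_, ⟨v0⟩⟩
    intro u v
    have good : ∀ b : ↥G.edgeSet, Sum.inr (Sum.inl b) ∈ M → (b : Sym2 V) ∈ F := by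
      intro b hb; by_contra hnb; exact hi b hnb hb
    obtain ⟨p⟩ := hconn.preconnected ⟨Sum.inl u, hV u⟩ ⟨Sum.inl v, hV v⟩
    simpa [proj] using walk_reach good p
  · -- (ii) → (i)
    intro hFc b hbF
    by_contra hbM
    set M' : Set (V ⊕ (↥G.edgeSet ⊕ (V ⊕ ↥F))) := M \ {Sum.inr (Sum.inl b)} with hM'
    have hsub : M' ⊆ M := Set.diff_subset
    have hVM' : ∀ u : V, Sum.inl u ∈ M' := fun u => ⟨hV u, by simp⟩
    have hBM' : ∀ f : ↥F,
        Sum.inr (Sum.inl (⟨(f : Sym2 V), hF f.2⟩ : ↥G.edgeSet)) ∈ M' := by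
      intro f
      refine ⟨hB f, ?_⟩
      simp only [Set.mem_singleton_iff, Sum.inr.injEq, Sum.inl.injEq]
      intro h
      apply hbF
      have hbe : (b : Sym2 V) = (f : Sym2 V) := by
        rw [← h]
      rw [hbe]; exact f.2
    have hdom' : ∀ w, w ∈ M' ∨ ∃ x ∈ M', (scsGraph G F).Adj w x := by
      intro w
      by_cases hw : w = Sum.inr (Sum.inl b)
      · subst hw
        refine Or.inr ⟨Sum.inl ((b : Sym2 V).out.1), hVM' _, ?_⟩
        exact (adj_b (Sym2.out_fst_mem _)).symm
      · rcases hdom w with hM | ⟨x, hx, hadj⟩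
        · exact Or.inl ⟨hM, hw⟩
        · by_cases hxb : x = Sum.inr (Sum.inl b)
          · subst hxb
            rcases eq_of_adj_b hadj with ⟨u, rfl, hu⟩ | ⟨f, rfl, hf⟩
            · exact Or.inl (hVM' u)
            · exact absurd (show (b : Sym2 V) ∈ F by rw [hf]; exact f.2) hbF
          · exact Or.inr ⟨x, ⟨hx, hxb⟩, hadj⟩
    have hreach_inl : ∀ u v : V,
        ((scsGraph G F).induce M').Reachable ⟨Sum.inl u, hVM' u⟩ ⟨Sum.inl v, hVM' v⟩ := by
      have key : ∀ {u v : V} (_ : (SimpleGraph.fromEdgeSet F).Walk u v),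
          ((scsGraph G F).induce M').Reachable ⟨Sum.inl u, hVM' u⟩ ⟨Sum.inl v, hVM' v⟩ := by
        intro u v p
        induction p with
        | nil => exact SimpleGraph.Reachable.refl _
        | @cons a c d h p ih =>
          rw [SimpleGraph.fromEdgeSet_adj] at h
          have hfF : s(a, c) ∈ F := h.1
          have hb1 : (scsGraph G F).Adj (Sum.inl a)
              (Sum.inr (Sum.inl ⟨s(a, c), hF hfF⟩)) := adj_b (by simp)
          have hb2 : (scsGraph G F).Adj (Sum.inl c)
              (Sum.inr (Sum.inl ⟨s(a, c), hF hfF⟩)) := adj_b (by simp)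
          have hbm : Sum.inr (Sum.inl (⟨s(a, c), hF hfF⟩ : ↥G.edgeSet)) ∈ M' :=
            hBM' ⟨s(a, c), hfF⟩
          exact ((induce_adj (hVM' a) hbm hb1).reachable.trans
            (induce_adj hbm (hVM' c) hb2.symm).reachable).trans ih
      intro u v
      obtain ⟨p⟩ := hFc.preconnected u v
      exact key p
    have hto : ∀ x : ↥M', ∃ u : V,
        ((scsGraph G F).induce M').Reachable x ⟨Sum.inl u, hVM' u⟩ := by
      rintro ⟨x, hx⟩
      rcases x with u | (b' | (g | f))
      · exact ⟨u, SimpleGraph.Reachable.refl _⟩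
      · exact ⟨(b' : Sym2 V).out.1,
          (induce_adj hx (hVM' _) (adj_b (Sym2.out_fst_mem _)).symm).reachable⟩
      · exact ⟨g, (induce_adj hx (hVM' g) (adj_g_iff.mpr rfl).symm).reachable⟩
      · refine ⟨((f : Sym2 V)).out.1, ?_⟩
        have h1 : (scsGraph G F).Adj (Sum.inr (Sum.inr (Sum.inr f)))
            (Sum.inr (Sum.inl (⟨(f : Sym2 V), hF f.2⟩ : ↥G.edgeSet))) :=
          ((adj_h_iff hF).mpr rfl).symm
        have h2 : (scsGraph G F).Adj (Sum.inl ((f : Sym2 V).out.1))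
            (Sum.inr (Sum.inl (⟨(f : Sym2 V), hF f.2⟩ : ↥G.edgeSet))) :=
          adj_b (Sym2.out_fst_mem _)
        exact (induce_adj hx (hBM' f) h1).reachable.trans
          (induce_adj (hBM' f) (hVM' _) h2.symm).reachable
    have hconn' : ((scsGraph G F).induce M').Connected := by
      rw [SimpleGraph.connected_iff]
      refine ⟨?_, ⟨⟨Sum.inl v0, hVM' v0⟩⟩⟩
      intro x y
      obtain ⟨u, hu⟩ := hto x
      obtain ⟨v, hv⟩ := hto y
      exact (hu.trans (hreach_inl u v)).trans hv.symm
    have hMM := hmin M' hsub hdom' hconn'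
    rw [← hMM] at hbM
    exact hbM.2 rfl
end

section
/- There exists a constant C > 0 such that for every hypergraph H = (V, E) on n ≥ 2 vertices the following holds. Let G(H) be the server graph of H. Then for some integer k there exist a partition of V into sets S_1, …, S_k, colors c_1, …, c_k ∈ {1, 2, …, ⌈C·log n⌉}, and connected subgraphs G_1, …, G_k of G(H) such that: (1) for every i, S_i ⊆ V(G_i) and the diameter of G_i is at most C·log n; (2) for any i ≠ j with c_i = c_j, no hyperedge of H contains a vertex of S_i and a vertex of S_j; and (3) every edge of G(H) belongs to at most C·log³ n of the subgraphs G_1, …, G_k. -/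
/-!
Linial–Saks ball carving, applied to the server graph. Inside the still uncolored vertex set `A`,
grow a ball around any vertex until one more step at most doubles it: since its size cannot double
more than `log₂ n` times, this happens at some radius `r ≤ log₂ n`. The ball of radius `r` becomes
a cluster of the current color, the shell between radii `r` and `r + 1` is deferred to later colors,
and no edge leaves the ball except into the shell. Repeating on what remains gives pairwise separated
clusters of one color covering at least half of `A`, so `log₂ n + 1` colors suffice. Each cluster is
taken with its induced subgraph, which has diameter at most `2 log₂ n`, and since the clusters are
disjoint every edge lies in at most one of them.
-/

/-- The server graph of a hypergraph with edge family `E`: two distinct vertices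
are adjacent iff some hyperedge contains both. -/
def serverGraph {V : Type*} (E : Finset (Finset V)) : SimpleGraph V :=
  SimpleGraph.fromRel fun u v => ∃ e ∈ E, u ∈ e ∧ v ∈ e

open Finset

theorem Nat.exists_le_two_mul_of_lt_two_pow {f : ℕ → ℕ} {R : ℕ} (h0 : 0 < f 0)
    (hR : f (R + 1) < 2 ^ (R + 1)) : ∃ r ≤ R, f (r + 1) ≤ 2 * f r := by
  by_contra! h
  have hgrow : ∀ r ≤ R + 1, 2 ^ r ≤ f r := by
    intro r hr
    induction r with
    | zero => exact h0
    | succ r ih =>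
      calc 2 ^ (r + 1) = 2 * 2 ^ r := by ring
        _ ≤ 2 * f r := by gcongr; exact ih (by omega)
        _ ≤ f (r + 1) := (h r (by omega)).le
  exact (hgrow (R + 1) le_rfl).not_gt hR

theorem List.Pairwise.rel_get_of_ne {α : Type*} {R : α → α → Prop} [Std.Symm R]
    {l : List α} (h : l.Pairwise R) {i j : Fin l.length} (hij : i ≠ j) :
    R (l.get i) (l.get j) := by
  rcases lt_or_gt_of_ne hij with hlt | hlt
  · exact List.pairwise_iff_get.1 h i j hlt
  · exact symm (List.pairwise_iff_get.1 h j i hlt)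

namespace SimpleGraph

variable {V : Type*} {G : SimpleGraph V}

variable (G) in
def ReachableWithin (A : Set V) (r : ℕ) (v x : V) : Prop :=
  ∃ p : G.Walk v x, p.length ≤ r ∧ ∀ y ∈ p.support, y ∈ A

namespace ReachableWithin

variable {A : Set V} {r : ℕ} {v x : V}

lemma refl (hv : v ∈ A) : G.ReachableWithin A r v v :=
  ⟨.nil, Nat.zero_le r, by simpa using hv⟩

lemma mem (h : G.ReachableWithin A r v x) : x ∈ A :=
  let ⟨p, _, hp⟩ := h
  hp x p.end_mem_support

lemma mono_radius {s : ℕ} (h : G.ReachableWithin A r v x) (hrs : r ≤ s) :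
    G.ReachableWithin A s v x :=
  let ⟨p, hp, hA⟩ := h
  ⟨p, hp.trans hrs, hA⟩

lemma concat {y : V} (h : G.ReachableWithin A r v x) (hxy : G.Adj x y) (hy : y ∈ A) :
    G.ReachableWithin A (r + 1) v y := by
  obtain ⟨p, hp, hA⟩ := h
  refine ⟨p.concat hxy, by simpa using hp, fun z hz => ?_⟩
  rw [Walk.support_concat, List.mem_append, List.mem_singleton] at hz
  exact hz.elim (hA z) (· ▸ hy)

/-- Every prefix of a witnessing walk is again a witness. -/
lemma restrict {B : Set V} (h : G.ReachableWithin A r v x)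
    (hB : ∀ y, G.ReachableWithin A r v y → y ∈ B) : G.ReachableWithin B r v x := by
  classical
  obtain ⟨p, hp, hA⟩ := h
  refine ⟨p, hp, fun y hy => hB y ⟨p.takeUntil y hy, ?_, fun z hz => ?_⟩⟩
  · exact (p.length_takeUntil_le_length hy).trans hp
  · exact hA z (p.support_takeUntil_subset_support hy hz)

end ReachableWithin

variable (G) in
def IsCluster (R : ℕ) (B : Finset V) : Prop :=
  ∃ v ∈ B, ∀ x ∈ B, G.ReachableWithin B R v x

lemma IsCluster.mono {R S : ℕ} {B : Finset V} (h : G.IsCluster R B) (hRS : R ≤ S) :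
    G.IsCluster S B :=
  let ⟨v, hv, hreach⟩ := h
  ⟨v, hv, fun x hx => (hreach x hx).mono_radius hRS⟩

lemma IsCluster.edist_induce_le {R : ℕ} {B : Finset V} (h : G.IsCluster R B) :
    ∃ c, ∀ x, (G.induce (B : Set V)).edist c x ≤ R := by
  obtain ⟨v, hv, hreach⟩ := h
  refine ⟨⟨v, hv⟩, fun ⟨x, hx⟩ => ?_⟩
  obtain ⟨p, hp, hB⟩ := hreach x hx
  calc (G.induce (B : Set V)).edist ⟨v, hv⟩ ⟨x, hx⟩ ≤ (p.induce _ hB).length := edist_le _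
    _ ≤ R := by
      rw [← Walk.length_map (Embedding.induce _).toHom, Walk.map_induce]
      exact_mod_cast hp

lemma IsCluster.induce_connected_and_diam_le {R : ℕ} {B : Finset V} (h : G.IsCluster R B) :
    ((⊤ : G.Subgraph).induce (B : Set V)).coe.Connected ∧
      ((⊤ : G.Subgraph).induce (B : Set V)).coe.diam ≤ 2 * R := by
  obtain ⟨c, hc⟩ := h.edist_induce_le
  have hdiam : (G.induce (B : Set V)).ediam ≤ (2 * R : ℕ) := by
    calc (G.induce (B : Set V)).ediam ≤ 2 * (G.induce (B : Set V)).eccent c :=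
          ediam_le_two_mul_eccent c
      _ ≤ 2 * R := by gcongr; exact (eccent_le_iff _ _).2 hc
      _ = (2 * R : ℕ) := by push_cast; rfl
  have : Nonempty ((⊤ : G.Subgraph).induce (B : Set V)).verts := ⟨c⟩
  rw [← induce_eq_coe_induce_top]
  exact ⟨connected_of_ediam_ne_top (ne_top_of_le_ne_top (ENat.natCast_ne_top _) hdiam),
    ENat.toNat_le_of_le_natCast hdiam⟩

variable (G) in
open Classical in
noncomputable def ballWithin (A : Finset V) (v : V) (r : ℕ) : Finset V :=
  {x ∈ A | G.ReachableWithin A r v x}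

section ballWithin

variable {A : Finset V} {v x : V} {r : ℕ}

lemma mem_ballWithin : x ∈ G.ballWithin A v r ↔ G.ReachableWithin A r v x := by
  classical
  rw [ballWithin, mem_filter]
  exact ⟨And.right, fun h => ⟨h.mem, h⟩⟩

lemma ballWithin_subset : G.ballWithin A v r ⊆ A :=
  fun _ hx => (mem_ballWithin.1 hx).mem

lemma ballWithin_mono {s : ℕ} (h : r ≤ s) : G.ballWithin A v r ⊆ G.ballWithin A v s :=
  fun _ hx => mem_ballWithin.2 ((mem_ballWithin.1 hx).mono_radius h)

lemma center_mem_ballWithin (hv : v ∈ A) : v ∈ G.ballWithin A v r :=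
  mem_ballWithin.2 (.refl hv)

lemma isCluster_ballWithin (hv : v ∈ A) : G.IsCluster r (G.ballWithin A v r) :=
  ⟨v, center_mem_ballWithin hv, fun _ hx =>
    (mem_ballWithin.1 hx).restrict fun _ hy => mem_ballWithin.2 hy⟩

lemma not_adj_of_mem_ballWithin {y : V} (hx : x ∈ G.ballWithin A v r) (hy : y ∈ A)
    (hy' : y ∉ G.ballWithin A v (r + 1)) : ¬ G.Adj x y :=
  fun hxy => hy' (mem_ballWithin.2 ((mem_ballWithin.1 hx).concat hxy hy))

end ballWithin

lemma exists_ballWithin_doubling {A : Finset V} {v : V} {R : ℕ} (hv : v ∈ A)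
    (hA : #A < 2 ^ (R + 1)) :
    ∃ r ≤ R, #(G.ballWithin A v (r + 1)) ≤ 2 * #(G.ballWithin A v r) :=
  Nat.exists_le_two_mul_of_lt_two_pow (f := fun r => #(G.ballWithin A v r))
    (card_pos.2 ⟨v, center_mem_ballWithin hv⟩) ((card_le_card ballWithin_subset).trans_lt hA)

variable (G) in
def Separated (B B' : Finset V) : Prop :=
  Disjoint B B' ∧ ∀ x ∈ B, ∀ y ∈ B', ¬ G.Adj x y

variable (G) in
def Compatible (p q : Finset V × ℕ) : Prop :=
  Disjoint p.1 q.1 ∧ (p.2 = q.2 → G.Separated p.1 q.1)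

instance : Std.Symm G.Compatible where
  symm _ _ := fun ⟨hdisj, hsep⟩ => ⟨hdisj.symm, fun hc =>
    ⟨(hsep hc.symm).1.symm, fun x hx y hy hxy => (hsep hc.symm).2 y hy x hx hxy.symm⟩⟩

section Carving

variable [DecidableEq V]

theorem exists_color_class (R : ℕ) (A : Finset V) (hA : #A < 2 ^ (R + 1)) :
    ∃ (cs : List (Finset V)) (rest : Finset V),
      (∀ B ∈ cs, B ⊆ A ∧ G.IsCluster R B ∧ Disjoint B rest) ∧ cs.Pairwise G.Separated ∧
      rest ⊆ A ∧ 2 * #rest ≤ #A ∧ ∀ a ∈ A, a ∉ rest → ∃ B ∈ cs, a ∈ B := by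
  induction A using Finset.strongInduction with
  | H A ih =>
  obtain rfl | ⟨v, hv⟩ := A.eq_empty_or_nonempty
  · exact ⟨[], ∅, by simp⟩
  obtain ⟨r, hrR, hr⟩ := exists_ballWithin_doubling (G := G) hv hA
  set B := G.ballWithin A v r
  set N := G.ballWithin A v (r + 1)
  have hBN : B ⊆ N := ballWithin_mono r.le_succ
  have hNA : N ⊆ A := ballWithin_subset
  obtain ⟨cs, rest, hcs, hsep, hrest, hcard, hcover⟩ :=
    ih (A \ N) (sdiff_ssubset hNA ⟨v, center_mem_ballWithin hv⟩)
      ((card_le_card sdiff_subset).trans_lt hA)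
  have hB_rest : Disjoint B (A \ N) := disjoint_sdiff.mono_left hBN
  refine ⟨B :: cs, rest ∪ (N \ B), ?_, ?_, ?_, ?_, ?_⟩
  · simp only [List.mem_cons, forall_eq_or_imp, disjoint_union_right]
    refine ⟨⟨ballWithin_subset, (isCluster_ballWithin hv).mono hrR, hB_rest.mono_right hrest,
      disjoint_sdiff⟩, fun B' hB' => ?_⟩
    obtain ⟨hB'A, hB'R, hB'rest⟩ := hcs B' hB'
    exact ⟨hB'A.trans sdiff_subset, hB'R, hB'rest,
      (sdiff_disjoint.mono_right sdiff_subset).mono_left hB'A⟩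
  · refine List.pairwise_cons.2 ⟨fun B' hB' => ⟨hB_rest.mono_right (hcs B' hB').1,
      fun x hx y hy => not_adj_of_mem_ballWithin hx ?_ ?_⟩, hsep⟩
    · exact (mem_sdiff.1 ((hcs B' hB').1 hy)).1
    · exact (mem_sdiff.1 ((hcs B' hB').1 hy)).2
  · exact union_subset (hrest.trans sdiff_subset) (sdiff_subset.trans hNA)
  · have hN : #(A \ N) + #N = #A := card_sdiff_add_card_eq_card hNA
    have hNB : #(N \ B) + #B = #N := card_sdiff_add_card_eq_card hBN
    have := card_union_le rest (N \ B)
    omega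
  · intro a ha hnot
    simp only [mem_union, mem_sdiff, not_or, not_and, not_not] at hnot
    by_cases haN : a ∈ N
    · exact ⟨B, List.mem_cons_self, hnot.2 haN⟩
    · obtain ⟨B', hB', haB'⟩ := hcover a (mem_sdiff.2 ⟨ha, haN⟩) hnot.1
      exact ⟨B', List.mem_cons_of_mem _ hB', haB'⟩

theorem exists_colored_clusters (R m : ℕ) (A : Finset V) (hm : #A < 2 ^ m)
    (hR : #A < 2 ^ (R + 1)) :
    ∃ L : List (Finset V × ℕ), (∀ p ∈ L, p.1 ⊆ A ∧ G.IsCluster R p.1 ∧ p.2 ∈ Icc 1 m) ∧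
      L.Pairwise G.Compatible ∧ ∀ a ∈ A, ∃ p ∈ L, a ∈ p.1 := by
  induction m generalizing A with
  | zero =>
    obtain rfl : A = ∅ := by simpa using hm
    exact ⟨[], by simp⟩
  | succ m ih =>
    obtain ⟨cs, rest, hcs, hsep, hrest, hcard, hcover⟩ := G.exists_color_class R A hR
    obtain ⟨L, hL, hLpair, hLcover⟩ :=
      ih rest (by rw [pow_succ] at hm; omega) ((card_le_card hrest).trans_lt hR)
    refine ⟨cs.map (·, 1) ++ L.map (fun p => (p.1, p.2 + 1)), ?_, ?_, ?_⟩
    · simp only [List.mem_append, List.mem_map]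
      rintro _ (⟨B, hB, rfl⟩ | ⟨p, hp, rfl⟩)
      · obtain ⟨hBA, hBR, -⟩ := hcs B hB
        exact ⟨hBA, hBR, by simp⟩
      · obtain ⟨hpA, hpR, hpc⟩ := hL p hp
        exact ⟨hpA.trans hrest, hpR, by simp only [mem_Icc] at hpc ⊢; omega⟩
    · refine List.pairwise_append.2 ⟨?_, ?_, ?_⟩
      · exact List.pairwise_map.2 (hsep.imp fun h => ⟨h.1, fun _ => h⟩)
      · exact List.pairwise_map.2 (hLpair.imp fun h => ⟨h.1, fun hc => h.2 (by omega)⟩)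
      · simp only [List.mem_map]
        rintro _ ⟨B, hB, rfl⟩ _ ⟨p, hp, rfl⟩
        refine ⟨(hcs B hB).2.2.mono_right (hL p hp).1, fun hc => ?_⟩
        change 1 = p.2 + 1 at hc
        have := (mem_Icc.1 (hL p hp).2.2).1
        omega
    · intro a ha
      by_cases har : a ∈ rest
      · obtain ⟨p, hp, hap⟩ := hLcover a har
        exact ⟨(p.1, p.2 + 1), List.mem_append_right _ (List.mem_map_of_mem hp), hap⟩
      · obtain ⟨B, hB, haB⟩ := hcover a ha har
        exact ⟨(B, 1), List.mem_append_left _ (List.mem_map_of_mem hB), haB⟩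

theorem exists_fin_clusters [Fintype V] (R : ℕ) (hV : Fintype.card V < 2 ^ (R + 1)) :
    ∃ (k : ℕ) (S : Fin k → Finset V) (c : Fin k → ℕ), (∀ v, ∃! i, v ∈ S i) ∧
      (∀ i, c i ∈ Icc 1 (R + 1) ∧ G.IsCluster R (S i)) ∧
      ∀ i j, i ≠ j → G.Compatible (S i, c i) (S j, c j) := by
  obtain ⟨L, hL, hpair, hcover⟩ := G.exists_colored_clusters R (R + 1) univ hV hV
  have hcompat : ∀ i j, i ≠ j → G.Compatible (L.get i) (L.get j) :=
    fun _ _ => hpair.rel_get_of_ne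
  refine ⟨L.length, fun i => (L.get i).1, fun i => (L.get i).2, fun v => ?_,
    fun i => ⟨(hL _ (L.get_mem i)).2.2, (hL _ (L.get_mem i)).2.1⟩, hcompat⟩
  obtain ⟨p, hp, hvp⟩ := hcover v (mem_univ v)
  obtain ⟨i, rfl⟩ := List.mem_iff_get.1 hp
  exact ⟨i, hvp, fun j hvj => by_contra fun hji =>
    Finset.disjoint_left.1 (hcompat j i hji).1 hvj hvp⟩

end Carving

end SimpleGraph

lemma serverGraph_adj_of_mem {V : Type*} {E : Finset (Finset V)} {e : Finset V} {u w : V}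
    (he : e ∈ E) (hu : u ∈ e) (hw : w ∈ e) (huw : u ≠ w) : (serverGraph E).Adj u w :=
  (SimpleGraph.fromRel_adj _ u w).2 ⟨huw, .inl ⟨e, he, hu, hw⟩⟩

lemma SimpleGraph.Separated.hyperedge_not_meets_both {V : Type*} {E : Finset (Finset V)}
    {B B' : Finset V} (h : (serverGraph E).Separated B B') :
    ∀ e ∈ E, ¬ ∃ u ∈ e, ∃ w ∈ e, u ∈ B ∧ w ∈ B' := by
  rintro e he ⟨u, hu, w, hw, huB, hwB'⟩
  by_cases huw : u = w
  · exact Finset.disjoint_left.1 h.1 huB (huw ▸ hwB')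
  · exact h.2 u huB w hwB' (serverGraph_adj_of_mem he hu hw huw)

lemma Real.half_le_log_natCast {n : ℕ} (hn : 2 ≤ n) : 1 / 2 ≤ Real.log n :=
  calc 1 / 2 ≤ Real.log 2 := by linarith [Real.log_two_gt_d9]
    _ ≤ Real.log n := Real.log_le_log two_pos (by exact_mod_cast hn)

lemma Real.natLog_two_le_two_mul_log (n : ℕ) : (Nat.log 2 n : ℝ) ≤ 2 * Real.log n := by
  have hlog2 := Real.log_two_gt_d9
  have hlogn : 0 ≤ Real.log n := Real.log_natCast_nonneg n
  calc (Nat.log 2 n : ℝ) ≤ Real.logb 2 n := by exact_mod_cast Real.natLog_le_logb n 2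
    _ = Real.log n / Real.log 2 := rfl
    _ ≤ 2 * Real.log n := by
      rw [div_le_iff₀ (by linarith)]
      nlinarith

/-- The existence content of the paper's extension of the Linial–Saks network
decomposition (Lemma `claim:decomposition`): there is a universal constant `C > 0`
such that the vertex set of every hypergraph on `n ≥ 2` vertices can be
partitioned into sets `S_1, …, S_k`, with colors `c_i ∈ {1, …, ⌈C log n⌉}` and
connected subgraphs `G_i` of the server graph, such that (1) `S_i ⊆ V(G_i)` and
`G_i` has diameter at most `C log n`; (2) sets of the same color are not joined
by any hyperedge; and (3) every edge of the server graph lies in at most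
`C log³ n` of the subgraphs. -/
theorem linial_saks_hypergraph_decomposition :
    ∃ C : ℝ, 0 < C ∧
      ∀ (V : Type) [Fintype V] [DecidableEq V] (E : Finset (Finset V)),
        2 ≤ Fintype.card V →
        ∃ (k : ℕ) (S : Fin k → Finset V) (c : Fin k → ℕ)
          (Gs : Fin k → (serverGraph E).Subgraph),
          (∀ v : V, ∃! i : Fin k, v ∈ S i) ∧
          (∀ i : Fin k, c i ∈ Finset.Icc 1 ⌈C * Real.log (Fintype.card V)⌉₊) ∧
          (∀ i : Fin k, ↑(S i) ⊆ (Gs i).verts ∧ (Gs i).coe.Connected ∧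
            ((Gs i).coe.diam : ℝ) ≤ C * Real.log (Fintype.card V)) ∧
          (∀ i j : Fin k, i ≠ j → c i = c j →
            ∀ e ∈ E, ¬ ∃ u ∈ e, ∃ w ∈ e, u ∈ S i ∧ w ∈ S j) ∧
          (∀ x y : V, (serverGraph E).Adj x y →
            ((Set.ncard {i : Fin k | (Gs i).Adj x y} : ℝ)
              ≤ C * Real.log (Fintype.card V) ^ 3)) := by
  refine ⟨8, by norm_num, fun V _ _ E hn => ?_⟩
  set R := Nat.log 2 (Fintype.card V)
  have hlog := Real.half_le_log_natCast hn
  have hR := Real.natLog_two_le_two_mul_log (Fintype.card V)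
  obtain ⟨k, S, c, hpart, hclust, hcompat⟩ :=
    (serverGraph E).exists_fin_clusters R (Nat.lt_pow_succ_log_self one_lt_two _)
  refine ⟨k, S, c, fun i => (⊤ : (serverGraph E).Subgraph).induce (S i), hpart, fun i => ?_,
    fun i => ?_, fun i j hij hc => ((hcompat i j hij).2 hc).hyperedge_not_meets_both,
    fun x y _ => ?_⟩
  · obtain ⟨hc1, hcR⟩ := mem_Icc.1 (hclust i).1
    refine mem_Icc.2 ⟨hc1, Nat.cast_le.1 (((Nat.cast_le (α := ℝ)).2 hcR).trans ?_)⟩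
    refine le_trans ?_ (Nat.le_ceil _)
    push_cast
    linarith
  · obtain ⟨hconn, hdiam⟩ := (hclust i).2.induce_connected_and_diam_le
    refine ⟨subset_rfl, hconn, (Nat.cast_le.2 hdiam).trans ?_⟩
    push_cast
    linarith
  · have hle : {i | ((⊤ : (serverGraph E).Subgraph).induce (S i)).Adj x y}.ncard ≤ 1 :=
      (Set.ncard_le_one (Set.toFinite _)).2 fun i hi j hj => by_contra fun hij =>
        Finset.disjoint_left.1 (hcompat i j hij).1 hi.1 hj.1
    have hcube : (1 / 2 : ℝ) ^ 3 ≤ Real.log (Fintype.card V) ^ 3 := by gcongr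
    calc (_ : ℝ) ≤ 1 := by exact_mod_cast hle
      _ ≤ 8 * Real.log (Fintype.card V) ^ 3 := by linarith
end

section
/- Let d ≥ 2 and D ≥ 2 be integers and let n' = 4·d·D. Let G be the simple graph whose vertices are the residues i ∈ ℤ/n'ℤ, where a vertex i is called a bridge vertex if d divides i, and where two distinct vertices i, j are adjacent if and only if their cyclic distance is at most d and at least one of i, j is a bridge vertex. Then every minimal connected dominating set M of G contains all bridge vertices except exactly one; that is, there is exactly one bridge vertex not in M. -/
/-- The paper's universal `Ω(D)` lower-bound graph on the residues `ZMod n'`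
(with `n' = 4·d·D`): a vertex `i` is a *bridge* vertex if `d` divides it, and two
distinct vertices are adjacent iff their cyclic distance is at most `d` and at
least one of them is a bridge vertex. -/
def bridgeRingGraph (d n : ℕ) : SimpleGraph (ZMod n) :=
  SimpleGraph.fromRel fun i j =>
    min (i - j).val (j - i).val ≤ d ∧ (i.val % d = 0 ∨ j.val % d = 0)

set_option linter.unusedSectionVars false
set_option linter.unusedVariables false

section Aux
variable {n d : ℕ} [NeZero n]

lemma brg_adj {i j : ZMod n} :
    (bridgeRingGraph d n).Adj i j ↔
      i ≠ j ∧ min (i - j).val (j - i).val ≤ d ∧ (i.val % d = 0 ∨ j.val % d = 0) := by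
  rw [bridgeRingGraph, SimpleGraph.fromRel_adj]
  constructor
  · rintro ⟨hne, h | h⟩
    · exact ⟨hne, h⟩
    · exact ⟨hne, by rw [min_comm]; exact h.1, h.2.symm⟩
  · rintro ⟨hne, h1, h2⟩
    exact ⟨hne, Or.inl ⟨h1, h2⟩⟩

lemma val_sub_val (x y : ZMod n) : (x - y).val = (x.val + (n - y.val)) % n := by
  have hy : y.val ≤ n := (ZMod.val_lt y).le
  have h : x - y = ((x.val + (n - y.val) : ℕ) : ZMod n) := by
    push_cast [Nat.cast_sub hy]
    simp [ZMod.natCast_zmod_val, ZMod.natCast_self]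
    ring
  rw [h, ZMod.val_natCast]

lemma val_sub_rel (b1 w x : ZMod n) :
    (w - x).val = ((w - b1).val + (n - (x - b1).val)) % n := by
  have h : w - x = (w - b1) - (x - b1) := by ring
  rw [h, val_sub_val]

lemma bridge_mod (hdn : d ∣ n) {b : ZMod n} (hb : b.val % d = 0) (w : ZMod n) :
    (w - b).val % d = w.val % d := by
  conv_rhs => rw [show w = (w - b) + b by ring]
  rw [ZMod.val_add, Nat.mod_mod_of_dvd _ hdn, Nat.add_mod, hb, Nat.add_zero, Nat.mod_mod]

lemma mem_bridge (hdn : d ∣ n) (a : ℕ) (ha : a % d = 0) :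
    ((a : ZMod n)).val % d = 0 := by
  rw [ZMod.val_natCast, Nat.mod_mod_of_dvd _ hdn, ha]

lemma adj_step (hd : 2 ≤ d) (hn : 4 * d ≤ n) (hdn : d ∣ n) (a : ℕ) (ha : a % d = 0) :
    (bridgeRingGraph d n).Adj ((a + d : ℕ) : ZMod n) ((a : ℕ) : ZMod n) := by
  have hdlt : d < n := by omega
  have hsub : ((a + d : ℕ) : ZMod n) - (a : ℕ) = ((d : ℕ) : ZMod n) := by
    push_cast; ring
  rw [brg_adj]
  refine ⟨?_, ?_, Or.inl (mem_bridge hdn _ (by simp [Nat.add_mod, ha]))⟩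
  · intro h
    have h0 : ((d : ℕ) : ZMod n) = 0 := by rw [← hsub, h, sub_self]
    have hv : ((d : ℕ) : ZMod n).val = d := ZMod.val_cast_of_lt hdlt
    rw [h0, ZMod.val_zero] at hv
    omega
  · refine le_trans (min_le_left _ _) ?_
    rw [hsub, ZMod.val_cast_of_lt hdlt]

end Aux

section BSet
variable {n d : ℕ} [NeZero n] (hd : 2 ≤ d) (hdn : d ∣ n) (hn : 4 * d ≤ n)

/-- The set of bridge vertices. -/
def Bset (d n : ℕ) : Set (ZMod n) := {w | w.val % d = 0}

include hd hdn hn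

lemma B_dom : ∀ w : ZMod n, w ∈ Bset d n ∨
    ∃ x ∈ Bset d n, (bridgeRingGraph d n).Adj w x := by
  intro w
  by_cases hw : w.val % d = 0
  · exact Or.inl hw
  · right
    set q := w.val / d with hq
    set r := w.val % d with hr
    have hrd : r < d := Nat.mod_lt _ (by omega)
    have hwval : w.val = q * d + r := by rw [hq, hr]; exact (Nat.div_add_mod' w.val d).symm
    refine ⟨((q * d : ℕ) : ZMod n), mem_bridge hdn _ (by simp [Nat.mul_mod]), ?_⟩
    rw [brg_adj]
    have hsub : w - ((q * d : ℕ) : ZMod n) = ((r : ℕ) : ZMod n) := by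
      have : w = ((q * d + r : ℕ) : ZMod n) := by
        rw [← hwval, ZMod.natCast_zmod_val]
      rw [this]; push_cast; ring
    have hrval : ((r : ℕ) : ZMod n).val = r := ZMod.val_cast_of_lt (by omega)
    refine ⟨?_, ?_, Or.inr (mem_bridge hdn _ (by simp [Nat.mul_mod]))⟩
    · intro h
      have : ((r : ℕ) : ZMod n) = 0 := by rw [← hsub, h, sub_self]
      rw [this, ZMod.val_zero] at hrval
      omega
    · refine le_trans (min_le_left _ _) ?_
      rw [hsub, hrval]; omega

lemma B_conn : ((bridgeRingGraph d n).induce (Bset d n)).Connected := by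
  have h0 : (0 : ZMod n) ∈ Bset d n := by
    simp [Bset, ZMod.val_zero]
  have key : ∀ q : ℕ, ((bridgeRingGraph d n).induce (Bset d n)).Reachable
      ⟨((q * d : ℕ) : ZMod n), mem_bridge hdn _ (by simp [Nat.mul_mod])⟩ ⟨0, h0⟩ := by
    intro q
    induction q with
    | zero =>
      have he : ((0 * d : ℕ) : ZMod n) = 0 := by simp
      exact ⟨(SimpleGraph.Walk.nil).copy (Subtype.ext he.symm) rfl⟩
    | succ q ih =>
      refine SimpleGraph.Reachable.trans ?_ ih
      apply SimpleGraph.Adj.reachable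
      show (bridgeRingGraph d n).Adj _ _
      have heq : q * d + d = (q + 1) * d := by ring
      have h2 : (bridgeRingGraph d n).Adj ((q * d + d : ℕ) : ZMod n) ((q * d : ℕ) : ZMod n) :=
        adj_step hd hn hdn _ (by simp [Nat.mul_mod])
      rw [heq] at h2
      exact h2
  rw [SimpleGraph.connected_iff_exists_forall_reachable]
  · have hrep : ∀ w : ↥(Bset d n), ((bridgeRingGraph d n).induce (Bset d n)).Reachable w ⟨0, h0⟩ := by
      intro w
      have hw : (w : ZMod n).val % d = 0 := w.2
      have hwq : (w : ZMod n).val / d * d = (w : ZMod n).val := Nat.div_mul_cancel (Nat.dvd_of_mod_eq_zero hw)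
      have hval : ((((w : ZMod n).val / d * d : ℕ)) : ZMod n) = (w : ZMod n) := by
        rw [hwq, ZMod.natCast_zmod_val]
      have hsub : w = ⟨(((w : ZMod n).val / d * d : ℕ) : ZMod n), mem_bridge hdn _ (by simp [Nat.mul_mod])⟩ :=
        Subtype.ext hval.symm
      rw [hsub]
      exact key _
    exact ⟨⟨0, h0⟩, fun w => (hrep w).symm⟩

end BSet

section B'Set
variable {n d : ℕ} [NeZero n] (hd : 2 ≤ d) (hdn : d ∣ n) (hn : 4 * d ≤ n)

include hd hdn hn

lemma d_mem_B' : ((d : ℕ) : ZMod n) ∈ Bset d n \ {0} := by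
  refine ⟨mem_bridge hdn _ (Nat.mod_self d), ?_⟩
  intro h
  have hv : ((d : ℕ) : ZMod n).val = d := ZMod.val_cast_of_lt (by omega)
  rw [h, ZMod.val_zero] at hv
  omega

lemma B'_dom : ∀ w : ZMod n, w ∈ Bset d n \ {0} ∨
    ∃ x ∈ Bset d n \ {0}, (bridgeRingGraph d n).Adj w x := by
  intro w
  by_cases hw0 : w = 0
  · right
    refine ⟨((d : ℕ) : ZMod n), d_mem_B' hd hdn hn, ?_⟩
    rw [brg_adj]
    have hv : ((d : ℕ) : ZMod n).val = d := ZMod.val_cast_of_lt (by omega)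
    refine ⟨?_, ?_, Or.inr (mem_bridge hdn _ (Nat.mod_self d))⟩
    · intro h
      rw [← h, hw0, ZMod.val_zero] at hv
      omega
    · refine le_trans (min_le_right _ _) ?_
      rw [hw0, sub_zero, hv]
  by_cases hw : w.val % d = 0
  · exact Or.inl ⟨hw, hw0⟩
  right
  set q := w.val / d with hq
  set r := w.val % d with hr
  have hrd : r < d := Nat.mod_lt _ (by omega)
  have hr0 : 0 < r := Nat.pos_of_ne_zero hw
  have hwval : w.val = q * d + r := by rw [hq, hr]; exact (Nat.div_add_mod' w.val d).symm
  have hwn : w.val < n := ZMod.val_lt w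
  by_cases hq0 : q = 0
  · -- use x = d
    refine ⟨((d : ℕ) : ZMod n), d_mem_B' hd hdn hn, ?_⟩
    rw [brg_adj]
    have hv : ((d : ℕ) : ZMod n).val = d := ZMod.val_cast_of_lt (by omega)
    have hsub : ((d : ℕ) : ZMod n) - w = ((d - r : ℕ) : ZMod n) := by
      have hwc : w = ((r : ℕ) : ZMod n) := by
        conv_lhs => rw [← ZMod.natCast_zmod_val w]
        rw [hwval, hq0]; norm_num
      rw [hwc, ← Nat.cast_sub hrd.le]
    refine ⟨?_, ?_, Or.inr (mem_bridge hdn _ (Nat.mod_self d))⟩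
    · intro h
      rw [← h, hwval, hq0] at hv
      omega
    · refine le_trans (min_le_right _ _) ?_
      rw [hsub, ZMod.val_cast_of_lt (by omega)]
      omega
  · -- use x = q * d
    have hqd : 0 < q * d := Nat.mul_pos (Nat.pos_of_ne_zero hq0) (by omega)
    refine ⟨((q * d : ℕ) : ZMod n), ⟨mem_bridge hdn _ (by simp [Nat.mul_mod]), ?_⟩, ?_⟩
    · intro h
      have hv : ((q * d : ℕ) : ZMod n).val = q * d := ZMod.val_cast_of_lt (by omega)
      rw [h, ZMod.val_zero] at hv
      omega
    rw [brg_adj]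
    have hsub : w - ((q * d : ℕ) : ZMod n) = ((r : ℕ) : ZMod n) := by
      conv_lhs => rw [← ZMod.natCast_zmod_val w]
      rw [hwval]; push_cast; ring
    have hrval : ((r : ℕ) : ZMod n).val = r := ZMod.val_cast_of_lt (by omega)
    refine ⟨?_, ?_, Or.inr (mem_bridge hdn _ (by simp [Nat.mul_mod]))⟩
    · intro h
      have : ((r : ℕ) : ZMod n) = 0 := by rw [← hsub, h, sub_self]
      rw [this, ZMod.val_zero] at hrval
      omega
    · refine le_trans (min_le_left _ _) ?_
      rw [hsub, hrval]; omega

lemma B'_conn : ((bridgeRingGraph d n).induce (Bset d n \ {0})).Connected := by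
  have hdmem := d_mem_B' (n := n) hd hdn hn
  have key : ∀ q : ℕ, 1 ≤ q → q * d < n →
      ∀ (hmem : ((q * d : ℕ) : ZMod n) ∈ Bset d n \ {0}),
      ((bridgeRingGraph d n).induce (Bset d n \ {0})).Reachable
        ⟨((q * d : ℕ) : ZMod n), hmem⟩ ⟨((d : ℕ) : ZMod n), hdmem⟩ := by
    intro q hq
    induction q, hq using Nat.le_induction with
    | base =>
      intro _ hmem
      have he : ((1 * d : ℕ) : ZMod n) = ((d : ℕ) : ZMod n) := by norm_num
      exact ⟨(SimpleGraph.Walk.nil).copy (Subtype.ext he.symm) rfl⟩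
    | succ q hq1 ih =>
      intro hlt hmem
      have hql : q * d < n := by
        refine lt_of_le_of_lt ?_ hlt
        exact Nat.mul_le_mul_right d (by omega)
      have hmem' : ((q * d : ℕ) : ZMod n) ∈ Bset d n \ {0} := by
        refine ⟨mem_bridge hdn _ (by simp [Nat.mul_mod]), ?_⟩
        intro h
        have hv : ((q * d : ℕ) : ZMod n).val = q * d := ZMod.val_cast_of_lt hql
        rw [h, ZMod.val_zero] at hv
        have : 1 * 1 ≤ q * d := Nat.mul_le_mul (by omega) (by omega)
        omega
      refine SimpleGraph.Reachable.trans ?_ (ih hql hmem')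
      apply SimpleGraph.Adj.reachable
      show (bridgeRingGraph d n).Adj _ _
      have heq : q * d + d = (q + 1) * d := by ring
      have h2 : (bridgeRingGraph d n).Adj ((q * d + d : ℕ) : ZMod n) ((q * d : ℕ) : ZMod n) :=
        adj_step hd hn hdn _ (by simp [Nat.mul_mod])
      rw [heq] at h2
      exact h2
  rw [SimpleGraph.connected_iff_exists_forall_reachable]
  refine ⟨⟨((d : ℕ) : ZMod n), hdmem⟩, fun w => ?_⟩
  obtain ⟨hwB, hw0⟩ := w.2
  have hwq : (w : ZMod n).val / d * d = (w : ZMod n).val :=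
    Nat.div_mul_cancel (Nat.dvd_of_mod_eq_zero hwB)
  have hq1 : 1 ≤ (w : ZMod n).val / d := by
    rcases Nat.eq_zero_or_pos ((w : ZMod n).val / d) with h | h
    · exfalso
      apply hw0
      have : (w : ZMod n).val = 0 := by rw [← hwq, h, Nat.zero_mul]
      exact Set.mem_singleton_iff.mpr ((ZMod.val_eq_zero _).mp this)
    · exact h
  have hltn : (w : ZMod n).val / d * d < n := by rw [hwq]; exact ZMod.val_lt _
  have hval : ((((w : ZMod n).val / d * d : ℕ)) : ZMod n) = (w : ZMod n) := by
    rw [hwq, ZMod.natCast_zmod_val]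
  have hmem : ((((w : ZMod n).val / d * d : ℕ)) : ZMod n) ∈ Bset d n \ {0} := by
    rw [hval]; exact w.2
  have hsub : w = ⟨((((w : ZMod n).val / d * d : ℕ)) : ZMod n), hmem⟩ := Subtype.ext hval.symm
  rw [hsub]
  exact (key _ hq1 hltn hmem).symm

end B'Set

section Unique
variable {n d : ℕ} [NeZero n] (hd : 2 ≤ d) (hdn : d ∣ n) (hn : 4 * d ≤ n)

include hd hdn hn

lemma cross_no_adj {b1 : ZMod n} (hb1 : b1.val % d = 0) {c : ℕ} (hc : c % d = 0)
    (hc0 : 0 < c) (hcn : c < n) {w x : ZMod n}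
    (hw1 : 0 < (w - b1).val) (hw2 : (w - b1).val < c) (hx : c < (x - b1).val)
    (hadj : (bridgeRingGraph d n).Adj w x) : False := by
  rw [brg_adj] at hadj
  obtain ⟨hne, hmin, hbr⟩ := hadj
  set a := (w - b1).val with ha
  set b := (x - b1).val with hb
  have hbn : b < n := ZMod.val_lt _
  have hab : a < b := lt_trans hw2 hx
  have h1 : (w - x).val = n - (b - a) := by
    rw [val_sub_rel b1, ← ha, ← hb]
    have he : a + (n - b) = n - (b - a) := by omega
    rw [he, Nat.mod_eq_of_lt (by omega)]
  have h2 : (x - w).val = b - a := by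
    rw [val_sub_rel b1, ← hb, ← ha]
    have he : b + (n - a) = n + (b - a) := by omega
    rw [he, Nat.add_mod_left, Nat.mod_eq_of_lt (by omega)]
  rw [h1, h2] at hmin
  rw [← bridge_mod hdn hb1 w, ← bridge_mod hdn hb1 x, ← ha, ← hb] at hbr
  have hdc : d ∣ c := Nat.dvd_of_mod_eq_zero hc
  rcases min_le_iff.mp hmin with hcase | hcase
  · -- n - (b - a) ≤ d
    rcases hbr with hA | hB
    · have hda : d ∣ a := Nat.dvd_of_mod_eq_zero hA
      have : d ≤ a := Nat.le_of_dvd (by omega) hda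
      omega
    · have hdb : d ∣ b := Nat.dvd_of_mod_eq_zero hB
      have hdnb : d ∣ n - b := Nat.dvd_sub hdn hdb
      have : d ≤ n - b := Nat.le_of_dvd (by omega) hdnb
      omega
  · -- b - a ≤ d
    rcases hbr with hA | hB
    · have hda : d ∣ a := Nat.dvd_of_mod_eq_zero hA
      have hdca : d ∣ c - a := Nat.dvd_sub hdc hda
      have : d ≤ c - a := Nat.le_of_dvd (by omega) hdca
      omega
    · have hdb : d ∣ b := Nat.dvd_of_mod_eq_zero hB
      have hdbc : d ∣ b - c := Nat.dvd_sub hdb hdc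
      have : d ≤ b - c := Nat.le_of_dvd (by omega) hdbc
      omega

lemma nbr_plus {b1 : ZMod n} (hb1 : b1.val % d = 0) {x : ZMod n}
    (hadj : (bridgeRingGraph d n).Adj (b1 + 1) x) :
    x = b1 ∨ x = b1 + ((d : ℕ) : ZMod n) := by
  have hn1 : 1 < n := by omega
  rw [brg_adj] at hadj
  obtain ⟨hne, hmin, hbr⟩ := hadj
  set a := (x - b1).val with ha
  have hxa : x = b1 + ((a : ℕ) : ZMod n) := by rw [ha, ZMod.natCast_zmod_val]; ring
  have han : a < n := ZMod.val_lt _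
  have hw1 : ((b1 + 1) - b1).val = 1 := by
    have he : (b1 + 1) - b1 = ((1 : ℕ) : ZMod n) := by push_cast; ring
    rw [he, ZMod.val_cast_of_lt hn1]
  have hwbr : (b1 + 1).val % d = 1 := by
    rw [← bridge_mod hdn hb1, hw1, Nat.mod_eq_of_lt (by omega)]
  have hax : a % d = 0 := by
    rcases hbr with h | h
    · omega
    · rw [← bridge_mod hdn hb1] at h; exact h
  by_cases ha0 : a = 0
  · left; rw [hxa, ha0]; norm_num
  have ha1 : a ≠ 1 := by
    intro h
    apply hne
    rw [hxa, h]; norm_num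
  have h2 : (x - (b1 + 1)).val = a - 1 := by
    rw [val_sub_rel b1, ← ha, hw1]
    have he : a + (n - 1) = n + (a - 1) := by omega
    rw [he, Nat.add_mod_left, Nat.mod_eq_of_lt (by omega)]
  have h3 : ((b1 + 1) - x).val = n + 1 - a := by
    rw [val_sub_rel b1, hw1, ← ha]
    have he : 1 + (n - a) = n + 1 - a := by omega
    rw [he, Nat.mod_eq_of_lt (by omega)]
  rw [h2, h3] at hmin
  have hda : d ∣ a := Nat.dvd_of_mod_eq_zero hax
  have hdle : d ≤ a := Nat.le_of_dvd (by omega) hda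
  rcases min_le_iff.mp hmin with h | h
  · exfalso
    have hdna : d ∣ n - a := Nat.dvd_sub hdn hda
    have : d ≤ n - a := Nat.le_of_dvd (by omega) hdna
    omega
  · right
    have had : a = d := by
      obtain ⟨k, hk⟩ := hda
      rcases k with _ | _ | k
      · simp at hk; omega
      · rw [Nat.mul_one] at hk; exact hk
      · exfalso
        have h2d : d * 2 ≤ d * (k + 2) := Nat.mul_le_mul_left d (by omega)
        rw [← hk] at h2d
        omega
    rw [hxa, had]

lemma nbr_minus {b1 : ZMod n} (hb1 : b1.val % d = 0) {x : ZMod n}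
    (hadj : (bridgeRingGraph d n).Adj (b1 - 1) x) :
    x = b1 ∨ x = b1 + ((n - d : ℕ) : ZMod n) := by
  have hn1 : 1 < n := by omega
  rw [brg_adj] at hadj
  obtain ⟨hne, hmin, hbr⟩ := hadj
  set a := (x - b1).val with ha
  have hxa : x = b1 + ((a : ℕ) : ZMod n) := by rw [ha, ZMod.natCast_zmod_val]; ring
  have han : a < n := ZMod.val_lt _
  have hcast : ((n - 1 : ℕ) : ZMod n) = -1 := by
    rw [Nat.cast_sub (by omega : 1 ≤ n)]
    simp [ZMod.natCast_self]
  have hw1 : ((b1 - 1) - b1).val = n - 1 := by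
    have he : (b1 - 1) - b1 = ((n - 1 : ℕ) : ZMod n) := by rw [hcast]; ring
    rw [he, ZMod.val_cast_of_lt (by omega)]
  have hwbr : (b1 - 1).val % d ≠ 0 := by
    rw [← bridge_mod hdn hb1, hw1]
    intro h
    have h1 : d ∣ n - (n - 1) := Nat.dvd_sub hdn (Nat.dvd_of_mod_eq_zero h)
    have h2 : n - (n - 1) = 1 := by omega
    rw [h2] at h1
    have := Nat.le_of_dvd (by omega) h1
    omega
  have hax : a % d = 0 := by
    rcases hbr with h | h
    · exact absurd h hwbr
    · rw [← bridge_mod hdn hb1] at h; exact h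
  by_cases ha0 : a = 0
  · left; rw [hxa, ha0]; norm_num
  have ha1 : a ≠ n - 1 := by
    intro h
    apply hne
    rw [hxa, h, hcast]; ring
  have h2 : (x - (b1 - 1)).val = a + 1 := by
    rw [val_sub_rel b1, ← ha, hw1]
    have he : a + (n - (n - 1)) = a + 1 := by omega
    rw [he, Nat.mod_eq_of_lt (by omega)]
  have h3 : ((b1 - 1) - x).val = n - 1 - a := by
    rw [val_sub_rel b1, hw1, ← ha]
    have he : (n - 1) + (n - a) = n + (n - 1 - a) := by omega
    rw [he, Nat.add_mod_left, Nat.mod_eq_of_lt (by omega)]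
  rw [h2, h3] at hmin
  have hda : d ∣ a := Nat.dvd_of_mod_eq_zero hax
  have hdle : d ≤ a := Nat.le_of_dvd (by omega) hda
  rcases min_le_iff.mp hmin with h | h
  · -- n - 1 - a ≤ d
    right
    have had : a = n - d := by
      have hdna : d ∣ n - a := Nat.dvd_sub hdn hda
      obtain ⟨k, hk⟩ := hdna
      rcases k with _ | _ | k
      · simp at hk; omega
      · rw [Nat.mul_one] at hk; omega
      · exfalso
        have h2d : d * 2 ≤ d * (k + 2) := Nat.mul_le_mul_left d (by omega)
        rw [← hk] at h2d
        omega
    rw [hxa, had]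
  · -- a + 1 ≤ d
    exfalso
    omega

end Unique

section Final
variable {n d : ℕ} [NeZero n] (hd : 2 ≤ d) (hdn : d ∣ n) (hn : 4 * d ≤ n)

include hd hdn hn

lemma exists_missing (M : Set (ZMod n))
    (hmin : ∀ M' ⊆ M, (∀ w, w ∈ M' ∨ ∃ x ∈ M', (bridgeRingGraph d n).Adj w x) →
      ((bridgeRingGraph d n).induce M').Connected → M' = M) :
    ∃ b : ZMod n, b.val % d = 0 ∧ b ∉ M := by
  by_contra h
  push_neg at h
  have hBM : Bset d n ⊆ M := fun b hb => h b hb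
  have hB := hmin (Bset d n) hBM (B_dom hd hdn hn) (B_conn hd hdn hn)
  have hB'M : Bset d n \ {0} ⊆ M := fun b hb => hBM hb.1
  have hB' := hmin _ hB'M (B'_dom hd hdn hn) (B'_conn hd hdn hn)
  have h0B : (0 : ZMod n) ∈ Bset d n := by
    show (0 : ZMod n).val % d = 0
    rw [ZMod.val_zero]
    exact Nat.zero_mod d
  have heq : Bset d n \ {0} = Bset d n := hB'.trans hB.symm
  rw [← heq] at h0B
  exact h0B.2 rfl

lemma unique_missing (M : Set (ZMod n))
    (hdom : ∀ w, w ∈ M ∨ ∃ x ∈ M, (bridgeRingGraph d n).Adj w x)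
    (hconn : ((bridgeRingGraph d n).induce M).Connected)
    {b1 b2 : ZMod n} (hb1 : b1.val % d = 0) (hb2 : b2.val % d = 0)
    (hm1 : b1 ∉ M) (hm2 : b2 ∉ M) (hne : b1 ≠ b2) : False := by
  set c := (b2 - b1).val with hc
  have hcn : c < n := ZMod.val_lt _
  have hcd : c % d = 0 := by rw [hc, bridge_mod hdn hb1, hb2]
  have hb2c : b2 = b1 + ((c : ℕ) : ZMod n) := by rw [hc, ZMod.natCast_zmod_val]; ring
  have hc0 : 0 < c := by
    rcases Nat.eq_zero_or_pos c with h | h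
    · exfalso; apply hne; rw [hb2c, h]; norm_num
    · exact h
  have hdc : d ∣ c := Nat.dvd_of_mod_eq_zero hcd
  have hdlec : d ≤ c := Nat.le_of_dvd hc0 hdc
  have hclen : c ≤ n - d := by
    have h1 : d ∣ n - c := Nat.dvd_sub hdn hdc
    have := Nat.le_of_dvd (by omega) h1
    omega
  have hMval : ∀ w ∈ M, 0 < (w - b1).val ∧ (w - b1).val ≠ c := by
    intro w hw
    constructor
    · rcases Nat.eq_zero_or_pos (w - b1).val with h | h
      · exfalso
        have h1 : w = b1 := sub_eq_zero.mp ((ZMod.val_eq_zero _).mp h)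
        exact hm1 (h1 ▸ hw)
      · exact h
    · intro h
      have h1 : w = b2 := by rw [hb2c, ← h, ZMod.natCast_zmod_val]; ring
      exact hm2 (h1 ▸ hw)
  obtain ⟨u, huM, hu⟩ : ∃ u ∈ M, (u - b1).val < c := by
    rcases hdom (b1 + 1) with h | ⟨x, hxM, hadj⟩
    · refine ⟨b1 + 1, h, ?_⟩
      have he : (b1 + 1) - b1 = ((1 : ℕ) : ZMod n) := by push_cast; ring
      rw [he, ZMod.val_cast_of_lt (by omega)]
      omega
    · rcases nbr_plus hd hdn hn hb1 hadj with h | h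
      · exact absurd (h ▸ hxM) hm1
      · refine ⟨x, hxM, ?_⟩
        have hxval : (x - b1).val = d := by
          rw [h]
          have he : (b1 + ((d : ℕ) : ZMod n)) - b1 = ((d : ℕ) : ZMod n) := by ring
          rw [he, ZMod.val_cast_of_lt (by omega)]
        have hne' : (x - b1).val ≠ c := (hMval x hxM).2
        omega
  obtain ⟨v, hvM, hv⟩ : ∃ v ∈ M, c < (v - b1).val := by
    rcases hdom (b1 - 1) with h | ⟨x, hxM, hadj⟩
    · refine ⟨b1 - 1, h, ?_⟩
      have hcast : ((n - 1 : ℕ) : ZMod n) = -1 := by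
        rw [Nat.cast_sub (by omega : 1 ≤ n)]
        simp [ZMod.natCast_self]
      have he : (b1 - 1) - b1 = ((n - 1 : ℕ) : ZMod n) := by rw [hcast]; ring
      rw [he, ZMod.val_cast_of_lt (by omega)]
      omega
    · rcases nbr_minus hd hdn hn hb1 hadj with h | h
      · exact absurd (h ▸ hxM) hm1
      · refine ⟨x, hxM, ?_⟩
        have hxval : (x - b1).val = n - d := by
          rw [h]
          have he : (b1 + ((n - d : ℕ) : ZMod n)) - b1 = ((n - d : ℕ) : ZMod n) := by ring
          rw [he, ZMod.val_cast_of_lt (by omega)]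
        have hne' : (x - b1).val ≠ c := (hMval x hxM).2
        omega
  have key : ∀ (p q : ↥M), ((bridgeRingGraph d n).induce M).Walk p q →
      ((p : ZMod n) - b1).val < c → ((q : ZMod n) - b1).val < c := by
    intro p q w
    induction w with
    | nil => exact id
    | @cons p' q' r' hadj w ih =>
      intro hp
      apply ih
      have hadj' : (bridgeRingGraph d n).Adj (p' : ZMod n) (q' : ZMod n) := hadj
      by_contra hq
      push_neg at hq
      have hqgt : c < ((q' : ZMod n) - b1).val := lt_of_le_of_ne hq (Ne.symm (hMval _ q'.2).2)
      exact cross_no_adj hd hdn hn hb1 hcd hc0 hcn (hMval _ p'.2).1 hp hqgt hadj'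
  obtain ⟨w⟩ := hconn.preconnected ⟨u, huM⟩ ⟨v, hvM⟩
  have := key _ _ w hu
  simp only at this
  omega

end Final

/-- Observation `obs:mcds` of the paper: for `d ≥ 2` and `D ≥ 2`, every minimal
connected dominating set `M` of the bridge-ring graph on `ZMod (4·d·D)` contains
all bridge vertices except exactly one. -/
theorem mcds_misses_exactly_one_bridge (d D : ℕ) (hd : 2 ≤ d) (hD : 2 ≤ D)
    (M : Set (ZMod (4 * d * D)))
    (hdom : ∀ w, w ∈ M ∨ ∃ x ∈ M, (bridgeRingGraph d (4 * d * D)).Adj w x)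
    (hconn : ((bridgeRingGraph d (4 * d * D)).induce M).Connected)
    (hmin : ∀ M' ⊆ M, (∀ w, w ∈ M' ∨ ∃ x ∈ M', (bridgeRingGraph d (4 * d * D)).Adj w x) →
      ((bridgeRingGraph d (4 * d * D)).induce M').Connected → M' = M) :
    ∃! b : ZMod (4 * d * D), b.val % d = 0 ∧ b ∉ M := by
  haveI : NeZero (4 * d * D) := by
    constructor
    have h1 : 0 < 4 * d * D := Nat.mul_pos (Nat.mul_pos (by omega) (by omega)) (by omega)
    omega
  have hdn : d ∣ 4 * d * D := ⟨4 * D, by ring⟩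
  have hn : 4 * d ≤ 4 * d * D := Nat.le_mul_of_pos_right _ (by omega)
  obtain ⟨b1, hb1, hm1⟩ := exists_missing hd hdn hn M hmin
  refine ⟨b1, ⟨hb1, hm1⟩, ?_⟩
  rintro b2 ⟨hb2, hm2⟩
  by_contra hne
  exact unique_missing hd hdn hn M hdom hconn hb2 hb1 hm2 hm1 hne
end
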